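/- Fix d ≥ 4, 2 ≤ m < 2d−1, and n̲ = (n₂,…,n_{m−1}) with each n_i ≥ 2. For n_m ≥ 2 let n̲_{n_m} = (n₂,…,n_{m−1},n_m). Then the sequence n_m ↦ λ_{d,n̲_{n_m}} of largest real roots converges to λ_{d,n̲} as n_m → ∞, and it is bounded above by λ_{d,n̲}. -/

import Mathlib

/-- The auxiliary polynomial `p_{d,n̲}` of the paper, evaluated at a real `x`. -/
def pPoly (d m : ℕ) (n : ℕ → ℕ) (x : ℝ) : ℝ :=
  (x^2 - ((d : ℝ) - 1) * x - 1) * ∏ i ∈ Finset.Icc 2 m, (x^(n i) + 1)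
    + x * ∑ i ∈ Finset.Icc 2 m, ∏ j ∈ (Finset.Icc 2 m).erase i, (x^(n j) + 1)

/-!
For `x > 0`, `p_{d,n̲}(x)` has the sign of `g(x) = x² − (d−1)x − 1 + ∑ x/(x^{n_i}+1)` (`pRatio`), and
appending an entry `N` to `n̲` adds `x/(x^N+1)` to `g`. Because `t/(t^n+1) − 1/t` is
nondecreasing on `[2, ∞)`, and `m < 2d − 1` bounds the number of summands, once `g ≥ 0` at some
`x ≥ 2` it stays positive beyond `x`; since `g(2) < 0`, `g` is negative on `[2, λ)` and positive
on `(λ, ∞)`. The added term is positive, so the new largest root is at most `λ`; it tends to `0`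
as `N → ∞`, so for every `x < λ` the new `g` is eventually negative at `x`, and the new largest
root eventually exceeds `x`.
-/

open Finset Filter

lemma div_pow_add_one_le_inv {x : ℝ} (hx : 0 < x) {n : ℕ} (hn : 2 ≤ n) :
    x / (x ^ n + 1) ≤ x⁻¹ := by
  rw [div_le_iff₀ (by positivity), ← div_eq_inv_mul, le_div_iff₀ hx]
  rcases le_total x 1 with h | h
  · nlinarith [pow_nonneg hx.le n]
  · nlinarith [pow_le_pow_right₀ h hn]

lemma monotoneOn_div_pow_add_one_sub_inv {n : ℕ} (hn : 2 ≤ n) :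
    MonotoneOn (fun t : ℝ => t / (t ^ n + 1) - t⁻¹) (Set.Ici 2) := by
  have hderiv : ∀ t : ℝ, 0 < t → HasDerivAt (fun t : ℝ => t / (t ^ n + 1) - t⁻¹)
      ((1 * (t ^ n + 1) - t * (n * t ^ (n - 1))) / (t ^ n + 1) ^ 2 - -(t ^ 2)⁻¹) t :=
    fun t ht => ((hasDerivAt_id t).div ((hasDerivAt_pow n t).add_const 1) (by positivity)).sub
      (hasDerivAt_inv ht.ne')
  have hpos : ∀ t ∈ Set.Ici (2 : ℝ), 0 < t := fun t ht => by linarith [Set.mem_Ici.1 ht]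
  refine monotoneOn_of_deriv_nonneg (convex_Ici 2)
    (fun t ht => (hderiv t (hpos t ht)).continuousAt.continuousWithinAt)
    (fun t ht => (hderiv t (hpos t (interior_subset ht))).differentiableAt.differentiableWithinAt)
    fun t ht => ?_
  rw [interior_Ici, Set.mem_Ioi] at ht
  obtain ⟨k, rfl⟩ : ∃ k, n = k + 2 := ⟨n - 2, by omega⟩
  have hbern : (k : ℝ) + 1 ≤ t ^ k := by
    have := one_add_mul_le_pow (show (-2 : ℝ) ≤ t - 1 by linarith) k
    rw [add_sub_cancel] at this
    nlinarith [k.cast_nonneg (α := ℝ)]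
  have hbern' := sub_nonneg.2 hbern
  rw [(hderiv t (by linarith)).deriv, show k + 2 - 1 = k + 1 by omega]
  calc (0 : ℝ) ≤ (t ^ k * t ^ 4 * (t ^ k - (k + 1)) + t ^ 2 + 2 * t ^ k * t ^ 2 + 1)
        / ((t ^ (k + 2) + 1) ^ 2 * t ^ 2) := by positivity
    _ = _ := by field_simp; push_cast; ring

lemma sum_div_pow_add_one_le_card_div {ι : Type*} (s : Finset ι) {n : ι → ℕ}
    (hn : ∀ i ∈ s, 2 ≤ n i) {x : ℝ} (hx : 0 < x) :
    ∑ i ∈ s, x / (x ^ n i + 1) ≤ #s / x := by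
  rw [div_eq_mul_inv, ← nsmul_eq_mul]
  exact sum_le_card_nsmul _ _ _ fun i hi => div_pow_add_one_le_inv hx (hn i hi)

lemma sum_div_pow_add_one_sub_card_div_le {ι : Type*} (s : Finset ι) {n : ι → ℕ}
    (hn : ∀ i ∈ s, 2 ≤ n i) {x y : ℝ} (hx : 2 ≤ x) (hxy : x ≤ y) :
    ∑ i ∈ s, x / (x ^ n i + 1) - #s / x ≤ ∑ i ∈ s, y / (y ^ n i + 1) - #s / y := by
  have := sum_le_sum fun i hi => monotoneOn_div_pow_add_one_sub_inv (hn i hi)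
    (Set.mem_Ici.2 hx) (Set.mem_Ici.2 (hx.trans hxy)) hxy
  simpa only [sum_sub_distrib, sum_const, nsmul_eq_mul, div_eq_mul_inv] using this

lemma sq_sub_mul_add_div_lt {d k x y : ℝ} (hd : 4 ≤ d) (hk0 : 0 ≤ k) (hk : k ≤ 2 * d - 3)
    (hx : 2 ≤ x) (hxy : x < y) (h : 1 ≤ x ^ 2 - (d - 1) * x + k / x) :
    x ^ 2 - (d - 1) * x + k / x < y ^ 2 - (d - 1) * y + k / y := by
  have hx0 : 0 < x := by linarith
  have hy0 : 0 < y := by linarith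
  have hcubic : 0 ≤ x ^ 3 - (d - 1) * x ^ 2 - x + k := by
    have := mul_le_mul_of_nonneg_right h hx0.le
    rw [add_mul, div_mul_cancel₀ _ hx0.ne'] at this
    nlinarith
  have hslope : 0 < 2 * x ^ 3 - (d - 1) * x ^ 2 - k := by
    rcases le_or_gt (x ^ 3 + x) (2 * k) with h' | h'
    -- `x ^ 3 + x ≤ 2 * k ≤ 4 * d - 6` contradicts `hcubic` for `x ≥ 2`
    · have h3x : 3 * x < 2 * d - 1 := by
        nlinarith [sq_nonneg (x - 2), sq_nonneg (2 * d - 1 - 3 * x), sq_nonneg (x + 2)]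
      nlinarith [sq_nonneg (x - 2), mul_nonneg (sub_nonneg.2 hx) (sub_nonneg.2 hx)]
    · nlinarith
  have hfactor : 0 < x * y * (y + x - (d - 1)) - k := by
    have h2x : d - 1 < 2 * x := by nlinarith
    nlinarith [mul_pos (mul_pos hx0 (sub_pos.2 hxy)) (show 0 < y + 2 * x - (d - 1) by linarith)]
  rw [← sub_pos]
  have hdiff : y ^ 2 - (d - 1) * y + k / y - (x ^ 2 - (d - 1) * x + k / x)
      = (y - x) * (x * y * (y + x - (d - 1)) - k) / (x * y) := by
    field_simp
    ring
  rw [hdiff]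
  exact div_pos (mul_pos (sub_pos.2 hxy) hfactor) (by positivity)

noncomputable def pRatio (d M : ℕ) (n : ℕ → ℕ) (x : ℝ) : ℝ :=
  x ^ 2 - ((d : ℝ) - 1) * x - 1 + ∑ i ∈ Icc 2 M, x / (x ^ n i + 1)

section

variable {d M : ℕ} {n : ℕ → ℕ}

lemma pPoly_eq_prod_mul_pRatio {x : ℝ} (hx : 0 < x) :
    pPoly d M n x = (∏ i ∈ Icc 2 M, (x ^ n i + 1)) * pRatio d M n x := by
  have herase : ∀ i ∈ Icc 2 M, x * ∏ j ∈ (Icc 2 M).erase i, (x ^ n j + 1)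
      = (∏ j ∈ Icc 2 M, (x ^ n j + 1)) * (x / (x ^ n i + 1)) := fun i hi => by
    rw [← mul_prod_erase _ _ hi]
    field_simp
  rw [pPoly, pRatio, mul_sum, sum_congr rfl herase, ← mul_sum]
  ring

lemma prod_pow_add_one_pos {x : ℝ} (hx : 0 < x) : 0 < ∏ i ∈ Icc 2 M, (x ^ n i + 1) :=
  prod_pos fun _ _ => by positivity

lemma pPoly_pos_iff {x : ℝ} (hx : 0 < x) : 0 < pPoly d M n x ↔ 0 < pRatio d M n x := by
  rw [pPoly_eq_prod_mul_pRatio hx, mul_pos_iff_of_pos_left (prod_pow_add_one_pos hx)]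

lemma pPoly_neg_iff {x : ℝ} (hx : 0 < x) : pPoly d M n x < 0 ↔ pRatio d M n x < 0 := by
  rw [pPoly_eq_prod_mul_pRatio hx, ← neg_pos, ← mul_neg,
    mul_pos_iff_of_pos_left (prod_pow_add_one_pos hx), neg_pos]

lemma pPoly_eq_zero_iff {x : ℝ} (hx : 0 < x) : pPoly d M n x = 0 ↔ pRatio d M n x = 0 := by
  rw [pPoly_eq_prod_mul_pRatio hx, mul_eq_zero, or_iff_right (prod_pow_add_one_pos hx).ne']

lemma continuous_pPoly : Continuous (pPoly d M n) := by
  unfold pPoly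
  fun_prop

lemma pRatio_update {m : ℕ} (hm : 2 ≤ m) (N : ℕ) (x : ℝ) :
    pRatio d m (Function.update n m N) x = pRatio d (m - 1) n x + x / (x ^ N + 1) := by
  have hIcc : Icc 2 m = insert m (Icc 2 (m - 1)) := by
    ext j
    simp only [mem_Icc, mem_insert]
    omega
  have hm : m ∉ Icc 2 (m - 1) := by simp only [mem_Icc]; omega
  rw [pRatio, pRatio, hIcc, sum_insert hm, Function.update_self,
    sum_congr rfl fun j hj => by rw [Function.update_of_ne (ne_of_mem_of_not_mem hj hm)]]
  ring

lemma pPoly_pos_of_le (hd : 2 ≤ d) {x : ℝ} (hx : d ≤ x) : 0 < pPoly d M n x := by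
  have hd' : (2 : ℝ) ≤ d := by exact_mod_cast hd
  have hx0 : 0 < x := by linarith
  rw [pPoly_pos_iff hx0, pRatio]
  have := sum_nonneg fun i (_ : i ∈ Icc 2 M) => (by positivity : 0 ≤ x / (x ^ n i + 1))
  nlinarith

lemma exists_pPoly_eq_zero_gt (hd : 2 ≤ d) {a : ℝ} (ha : pPoly d M n a < 0) :
    ∃ x, a < x ∧ pPoly d M n x = 0 := by
  obtain ⟨x, hx, hx0⟩ := intermediate_value_Ioo (le_max_left a d) continuous_pPoly.continuousOn
    ⟨ha, pPoly_pos_of_le hd (le_max_right a d)⟩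
  exact ⟨x, hx.1, hx0⟩

lemma pPoly_pos_of_isGreatest_lt (hd : 2 ≤ d) {lam : ℝ}
    (hlam : IsGreatest {x | pPoly d M n x = 0} lam) {y : ℝ} (hy : lam < y) :
    0 < pPoly d M n y := by
  rcases lt_trichotomy (pPoly d M n y) 0 with hneg | hzero | hpos
  · obtain ⟨x, hyx, hx⟩ := exists_pPoly_eq_zero_gt hd hneg
    exact absurd (hlam.2 hx) (by linarith)
  · exact absurd (hlam.2 hzero) hy.not_ge
  · exact hpos

lemma card_Icc_two_le (hd : 2 ≤ d) (hM : M + 2 ≤ 2 * d) : (#(Icc 2 M) : ℝ) ≤ 2 * d - 3 := by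
  rw [Nat.card_Icc, le_sub_iff_add_le]
  exact_mod_cast (by omega : M + 1 - 2 + 3 ≤ 2 * d)

variable (hd : 4 ≤ d) (hM : M + 2 ≤ 2 * d) (hn : ∀ i ∈ Icc 2 M, 2 ≤ n i)
include hd hM hn

lemma pRatio_two_neg : pRatio d M n 2 < 0 := by
  have hd' : (4 : ℝ) ≤ d := by exact_mod_cast hd
  have hk := card_Icc_two_le (by omega) hM
  have := sum_div_pow_add_one_le_card_div _ hn two_pos
  rw [pRatio]
  linarith

lemma pRatio_pos_of_nonneg_of_lt {x y : ℝ} (hx : 2 ≤ x) (hxy : x < y)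
    (h : 0 ≤ pRatio d M n x) : 0 < pRatio d M n y := by
  have hsum := sum_div_pow_add_one_le_card_div _ hn (by linarith : (0 : ℝ) < x)
  have hmono := sum_div_pow_add_one_sub_card_div_le _ hn hx hxy.le
  have hF := sq_sub_mul_add_div_lt (by exact_mod_cast hd) (Nat.cast_nonneg _)
    (card_Icc_two_le (by omega) hM) hx hxy (by rw [pRatio] at h; linarith)
  rw [pRatio] at h ⊢
  linarith

lemma two_lt_of_isGreatest {lam : ℝ} (hlam : IsGreatest {x | pPoly d M n x = 0} lam) :
    2 < lam := by
  obtain ⟨x, hx, hx0⟩ := exists_pPoly_eq_zero_gt (by omega)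
    ((pPoly_neg_iff two_pos).2 (pRatio_two_neg hd hM hn))
  exact hx.trans_le (hlam.2 hx0)

lemma pRatio_neg_of_isGreatest {lam : ℝ} (hlam : IsGreatest {x | pPoly d M n x = 0} lam)
    {x : ℝ} (hx : 2 ≤ x) (hxl : x < lam) : pRatio d M n x < 0 := by
  by_contra! h
  exact (pRatio_pos_of_nonneg_of_lt hd hM hn hx hxl h).ne'
    ((pPoly_eq_zero_iff (by linarith)).1 hlam.1)

end

lemma eventually_pRatio_update_neg {d m : ℕ} {n : ℕ → ℕ} (hm : 2 ≤ m) {x : ℝ} (hx : 1 < x)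
    (h : pRatio d (m - 1) n x < 0) :
    ∀ᶠ N in atTop, pRatio d m (Function.update n m N) x < 0 := by
  have hlim : Tendsto (fun N : ℕ => x / (x ^ N + 1)) atTop (nhds 0) :=
    tendsto_const_nhds.div_atTop
      (tendsto_atTop_add_const_right _ 1 (tendsto_pow_atTop_atTop_of_one_lt hx))
  have hlim' : Tendsto (fun N : ℕ => pRatio d (m - 1) n x + x / (x ^ N + 1)) atTop
      (nhds (pRatio d (m - 1) n x)) := by
    simpa using tendsto_const_nhds.add hlim
  simpa only [pRatio_update hm] using hlim'.eventually_lt_const h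

/-- Extending the tuple `n̲ = (n₂,…,n_{m−1})` by a last entry `n_m`, the largest real
roots `λ_{d,(n₂,…,n_m)}` converge to `λ_{d,n̲}` as `n_m → ∞`, and are bounded above
by `λ_{d,n̲}`. -/
theorem stmt5 (d m : ℕ) (hd : 4 ≤ d) (hm1 : 2 ≤ m) (hm2 : m < 2*d - 1)
    (n : ℕ → ℕ) (hn : ∀ i ∈ Finset.Icc 2 (m-1), 2 ≤ n i)
    (lamInf : ℝ) (hlamInf : IsGreatest {x : ℝ | pPoly d (m-1) n x = 0} lamInf)
    (lamSeq : ℕ → ℝ)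
    (hlamSeq : ∀ N, 2 ≤ N →
      IsGreatest {x : ℝ | pPoly d m (Function.update n m N) x = 0} (lamSeq N)) :
    Filter.Tendsto lamSeq Filter.atTop (nhds lamInf) ∧
    ∀ N, 2 ≤ N → lamSeq N ≤ lamInf := by
  have hM : m - 1 + 2 ≤ 2 * d := by omega
  have hlam2 := two_lt_of_isGreatest hd hM hn hlamInf
  have hle : ∀ N, 2 ≤ N → lamSeq N ≤ lamInf := fun N hN => by
    by_contra! hlt
    have hy : 0 < lamSeq N := by linarith
    have hroot := (pPoly_eq_zero_iff hy).1 (hlamSeq N hN).1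
    have hpos := (pPoly_pos_iff hy).1 (pPoly_pos_of_isGreatest_lt (by omega) hlamInf hlt)
    rw [pRatio_update hm1] at hroot
    have : 0 < lamSeq N / (lamSeq N ^ N + 1) := by positivity
    linarith
  refine ⟨tendsto_order.2 ⟨fun a ha => ?_, fun b hb => ?_⟩, hle⟩
  · have hneg := pRatio_neg_of_isGreatest hd hM hn hlamInf (le_max_right a 2) (max_lt ha hlam2)
    filter_upwards [eventually_pRatio_update_neg hm1 (by simp) hneg, eventually_ge_atTop 2]
      with N hN hN2
    obtain ⟨x, hx, hx0⟩ :=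
      exists_pPoly_eq_zero_gt (by omega) ((pPoly_neg_iff (by positivity)).2 hN)
    exact (le_max_left a 2).trans_lt (hx.trans_le ((hlamSeq N hN2).2 hx0))
  · filter_upwards [eventually_ge_atTop 2] with N hN
    exact (hle N hN).trans_lt hb
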